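/- Let h : ℝ³ × ℝ³ → [0,∞) be measurable with ‖⟨x⟩^{3+ε}⟨p⟩⁵ h‖_{L^∞} < ∞ for some ε > 0. Then for any c ≥ 1, 0 ≤ θ ≤ 1, and t > 0, the quantity T^θ[h](x) = ∫_{ℝ³} h(x − t v_c^θ(p), p) dp satisfies ‖T^θ[h]‖_{L^∞_x} ≤ C t^{−3} ‖⟨x⟩^{3+ε}⟨p⟩⁵ h‖_{L^∞} for a constant C independent of c, θ, t. -/

import Mathlib

open MeasureTheory

noncomputable section

/-- The relativistic Lorentz factor `γ_c(p) = √(1 + |p|²/c²)`. -/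
def gam (c : ℝ) (p : EuclideanSpace ℝ (Fin 3)) : ℝ := Real.sqrt (1 + ‖p‖ ^ 2 / c ^ 2)

/-- The interpolated velocity `v_c^θ(p) = θ p/γ_c(p) + (1−θ) p`. -/
def velθ (θ c : ℝ) (p : EuclideanSpace ℝ (Fin 3)) : EuclideanSpace ℝ (Fin 3) :=
  (θ / gam c p + (1 - θ)) • p

/-- The Japanese bracket `⟨y⟩ = √(1 + |y|²)`. -/
def jb (y : EuclideanSpace ℝ (Fin 3)) : ℝ := Real.sqrt (1 + ‖y‖ ^ 2)

/-! The substitution `w = v_c^θ(p)` is legitimate because `v_c^θ` is injective (`|v_c^θ(p)|` is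
strictly increasing in `|p|`), and its Jacobian `(θ/γ + 1 - θ)² (θ/γ³ + 1 - θ)` is at least
`γ⁻⁵ ≥ ⟨p⟩⁻⁵`. So the `⟨p⟩⁻⁵` decay of `h` pays for the Jacobian, and
`T^θ[h](x) ≤ M ∫ ⟨x - t w⟩^{-(3+ε)} dw = M t⁻³ ∫ ⟨y⟩^{-(3+ε)} dy`. -/

open Module Set Function

section RankOnePerturbation

variable {K V : Type*} [Field K] [AddCommGroup V] [Module K V] [FiniteDimensional K V]

theorem LinearMap.det_one_add_smulRight (ℓ : V →ₗ[K] K) (v : V) :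
    LinearMap.det (1 + ℓ.smulRight v) = 1 + ℓ v := by
  let b := Module.finBasis K V
  have hmat : LinearMap.toMatrix b b (1 + ℓ.smulRight v) =
      1 + Matrix.replicateCol Unit (b.repr v) * Matrix.replicateRow Unit (fun j => ℓ (b j)) := by
    ext i j
    simp [LinearMap.toMatrix_apply, Matrix.one_apply, Finsupp.single_apply, eq_comm,
      Matrix.mul_apply, mul_comm]
  rw [← LinearMap.det_toMatrix b, hmat, Matrix.det_one_add_replicateCol_mul_replicateRow]
  conv_rhs => rw [← b.sum_repr v, map_sum]
  simp [dotProduct, mul_comm]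

theorem LinearMap.det_smul_one_add_smulRight {a : K} (ha : a ≠ 0) (ℓ : V →ₗ[K] K) (v : V) :
    LinearMap.det (a • 1 + ℓ.smulRight v) = a ^ finrank K V * (1 + ℓ v / a) := by
  have : a • 1 + ℓ.smulRight v = a • (1 + (a⁻¹ • ℓ).smulRight v) := by
    ext x; simp [smul_smul, ha]
  rw [this, LinearMap.det_smul, LinearMap.det_one_add_smulRight]
  simp [div_eq_inv_mul]

end RankOnePerturbation

theorem injective_radial_smul_of_strictMonoOn {E : Type*} [NormedAddCommGroup E] [NormedSpace ℝ E]
    {f : ℝ → ℝ} (hf : ∀ r, 0 ≤ r → 0 < f r) (hmono : StrictMonoOn (fun r => f r * r) (Ici 0)) :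
    Injective fun p : E => f ‖p‖ • p := by
  intro p q hpq
  have hnorm : f ‖p‖ * ‖p‖ = f ‖q‖ * ‖q‖ := by
    simpa [norm_smul, abs_of_pos (hf _ (norm_nonneg p)), abs_of_pos (hf _ (norm_nonneg q))]
      using congrArg norm hpq
  have hpq' : ‖p‖ = ‖q‖ := hmono.injOn (norm_nonneg p) (norm_nonneg q) hnorm
  simp only [hpq'] at hpq
  exact smul_right_injective E (hf _ (norm_nonneg q)).ne' hpq

section ChangeOfVariables

variable {E : Type*} [NormedAddCommGroup E] [NormedSpace ℝ E] [FiniteDimensional ℝ E]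
  [MeasurableSpace E] [BorelSpace E] (μ : Measure E) [μ.IsAddHaarMeasure]

theorem lintegral_mul_comp_le_lintegral {v : E → E} (hv : Differentiable ℝ v) (hinj : Injective v)
    {w : E → ENNReal} (hw : ∀ p, w p ≤ ENNReal.ofReal |(fderiv ℝ v p).det|) (F : E → ENNReal) :
    ∫⁻ p, w p * F (v p) ∂μ ≤ ∫⁻ y, F y ∂μ :=
  calc ∫⁻ p, w p * F (v p) ∂μ ≤ ∫⁻ p, ENNReal.ofReal |(fderiv ℝ v p).det| * F (v p) ∂μ :=
        lintegral_mono fun p => by gcongr; exact hw p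
    _ = ∫⁻ y in v '' univ, F y ∂μ := by
        rw [lintegral_image_eq_lintegral_abs_det_fderiv_mul μ MeasurableSet.univ
          (fun p _ => (hv p).hasFDerivAt.hasFDerivWithinAt) hinj.injOn, Measure.restrict_univ]
    _ ≤ ∫⁻ y, F y ∂μ := setLIntegral_le_lintegral _ _

theorem integral_comp_sub_smul {F : Type*} [NormedAddCommGroup F] [NormedSpace ℝ F] (f : E → F)
    (x : E) {t : ℝ} (ht : 0 ≤ t) :
    ∫ y, f (x - t • y) ∂μ = (t ^ finrank ℝ E)⁻¹ • ∫ y, f y ∂μ := by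
  rw [Measure.integral_comp_smul_of_nonneg μ (fun u => f (x - u)) t (hR := ht),
    integral_sub_left_eq_self]

end ChangeOfVariables

theorem integral_le_of_lintegral_ofReal_le {α : Type*} [MeasurableSpace α] {μ : Measure α}
    {f : α → ℝ} (hf : 0 ≤ f) {b : ℝ} (hb : 0 ≤ b)
    (h : ∫⁻ a, ENNReal.ofReal (f a) ∂μ ≤ ENNReal.ofReal b) : ∫ a, f a ∂μ ≤ b := by
  have : ‖∫ a, f a ∂μ‖ₑ ≤ ENNReal.ofReal b := by
    refine (enorm_integral_le_lintegral_enorm f).trans ?_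
    simpa only [Real.enorm_of_nonneg (hf _)] using h
  rw [Real.enorm_eq_ofReal_abs, ENNReal.ofReal_le_ofReal_iff hb] at this
  exact (le_abs_self _).trans this

local notation "ℝ³" => EuclideanSpace ℝ (Fin 3)

lemma one_le_gam (c : ℝ) (p : ℝ³) : 1 ≤ gam c p :=
  Real.one_le_sqrt.2 (le_add_of_nonneg_right (by positivity))

lemma gam_pos (c : ℝ) (p : ℝ³) : 0 < gam c p := one_pos.trans_le (one_le_gam c p)

lemma gam_sq (c : ℝ) (p : ℝ³) : gam c p ^ 2 = 1 + ‖p‖ ^ 2 / c ^ 2 :=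
  Real.sq_sqrt (by positivity)

lemma jb_pos (p : ℝ³) : 0 < jb p := Real.sqrt_pos.2 (by positivity)

lemma jb_rpow_pos (p : ℝ³) (β : ℝ) : 0 < jb p ^ β := Real.rpow_pos_of_pos (jb_pos p) β

lemma gam_le_jb {c : ℝ} (hc : 1 ≤ c) (p : ℝ³) : gam c p ≤ jb p := by
  refine Real.sqrt_le_sqrt (add_le_add_right (div_le_self (by positivity) ?_) 1)
  nlinarith

lemma hasFDerivAt_gam {c : ℝ} (hc : c ≠ 0) (p : ℝ³) :
    HasFDerivAt (gam c) ((c ^ 2 * gam c p)⁻¹ • innerSL ℝ p) p := by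
  have h : HasFDerivAt (fun q : ℝ³ => 1 + ‖q‖ ^ 2 / c ^ 2)
      ((c ^ 2)⁻¹ • (2 • innerSL ℝ p)) p := by
    simpa [div_eq_mul_inv, mul_comm] using
      ((HasFDerivAt.norm_sq (hasFDerivAt_id p)).const_mul (c ^ 2)⁻¹).const_add 1
  refine (HasFDerivAt.sqrt h (by positivity)).congr_fderiv ?_
  ext q
  simp only [one_div, mul_inv_rev, smul_apply, coe_innerSL_apply, nsmul_eq_mul, Nat.cast_ofNat,
    smul_eq_mul, gam]
  field_simp

lemma hasFDerivAt_velθ (θ : ℝ) {c : ℝ} (hc : c ≠ 0) (p : ℝ³) :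
    HasFDerivAt (velθ θ c)
      ((θ / gam c p + (1 - θ)) • ContinuousLinearMap.id ℝ ℝ³ +
        (-(θ / (c ^ 2 * gam c p ^ 3)) • innerSL ℝ p).smulRight p) p := by
  have hγ := gam_pos c p
  have h : HasFDerivAt (fun q => θ / gam c q + (1 - θ))
      (-(θ / (c ^ 2 * gam c p ^ 3)) • innerSL ℝ p) p := by
    have hinv := (hasDerivAt_inv hγ.ne').comp_hasFDerivAt p (hasFDerivAt_gam hc p)
    refine ((hinv.const_mul θ).add_const (1 - θ)).congr_fderiv ?_
    ext q
    simp only [mul_inv_rev, neg_smul, smul_neg, neg_apply, smul_apply, coe_innerSL_apply,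
      smul_eq_mul, neg_inj]
    field_simp
  exact HasFDerivAt.smul h (hasFDerivAt_id p)

lemma inv_le_div_add_one_sub {θ g : ℝ} (hθ : θ ≤ 1) (hg : 1 ≤ g) : g⁻¹ ≤ θ / g + (1 - θ) := by
  have : g⁻¹ ≤ 1 := inv_le_one_of_one_le₀ hg
  rw [div_eq_mul_inv]
  nlinarith

lemma div_add_one_sub_pos {θ g : ℝ} (hθ : θ ≤ 1) (hg : 1 ≤ g) : 0 < θ / g + (1 - θ) :=
  (inv_pos.2 (one_pos.trans_le hg)).trans_le (inv_le_div_add_one_sub hθ hg)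

lemma det_fderiv_velθ (θ : ℝ) {c : ℝ} (hc : c ≠ 0) (hθ : θ ≤ 1) (p : ℝ³) :
    (fderiv ℝ (velθ θ c) p).det = (θ / gam c p + (1 - θ)) ^ 2 * (θ / gam c p ^ 3 + (1 - θ)) := by
  have hγ := (gam_pos c p).ne'
  have ha := (div_add_one_sub_pos hθ (one_le_gam c p)).ne'
  have hcoe : ((fderiv ℝ (velθ θ c) p : ℝ³ →L[ℝ] ℝ³) : ℝ³ →ₗ[ℝ] ℝ³) =
      (θ / gam c p + (1 - θ)) • 1 +
        ((-(θ / (c ^ 2 * gam c p ^ 3)) • innerSL ℝ p : ℝ³ →L[ℝ] ℝ) : ℝ³ →ₗ[ℝ] ℝ).smulRight p := by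
    rw [(hasFDerivAt_velθ θ hc p).fderiv]
    rfl
  rw [ContinuousLinearMap.det, hcoe, LinearMap.det_smul_one_add_smulRight ha,
    finrank_euclideanSpace_fin]
  simp only [ContinuousLinearMap.coe_coe, smul_apply, innerSL_apply_apply,
    real_inner_self_eq_norm_sq, smul_eq_mul]
  have hp : ‖p‖ ^ 2 = c ^ 2 * (gam c p ^ 2 - 1) := by rw [gam_sq]; field_simp; ring
  generalize ha' : θ / gam c p + (1 - θ) = a at ha ⊢
  have hfactor : a ^ 3 * (1 + -(θ / (c ^ 2 * gam c p ^ 3)) * ‖p‖ ^ 2 / a)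
      = a ^ 2 * (a - θ / (c ^ 2 * gam c p ^ 3) * ‖p‖ ^ 2) := by
    field_simp; ring
  rw [hfactor, ← ha', hp]
  field_simp
  ring

lemma inv_jb_pow_five_le_det_fderiv_velθ {θ c : ℝ} (hc : 1 ≤ c) (hθ : θ ≤ 1) (p : ℝ³) :
    (jb p ^ 5)⁻¹ ≤ (fderiv ℝ (velθ θ c) p).det := by
  have hγ := one_le_gam c p
  rw [det_fderiv_velθ θ (by positivity) hθ p]
  calc (jb p ^ 5)⁻¹ ≤ (gam c p ^ 5)⁻¹ :=
        inv_anti₀ (by positivity) (pow_le_pow_left₀ (by positivity) (gam_le_jb hc p) 5)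
    _ = (gam c p)⁻¹ ^ 2 * (gam c p ^ 3)⁻¹ := by field_simp
    _ ≤ (θ / gam c p + (1 - θ)) ^ 2 * (θ / gam c p ^ 3 + (1 - θ)) := by
        gcongr
        · exact inv_le_div_add_one_sub hθ hγ
        · exact inv_le_div_add_one_sub hθ (one_le_pow₀ hγ)

lemma strictMonoOn_div_sqrt_one_add_sq_div_sq (c : ℝ) :
    StrictMonoOn (fun r : ℝ => r / √(1 + r ^ 2 / c ^ 2)) (Ici 0) := by
  intro r (hr : 0 ≤ r) s (hs : 0 ≤ s) hrs
  rw [div_lt_div_iff₀ (by positivity) (by positivity)]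
  refine lt_of_pow_lt_pow_left₀ 2 (by positivity) ?_
  rw [mul_pow, mul_pow, Real.sq_sqrt (by positivity), Real.sq_sqrt (by positivity)]
  have hsq : r ^ 2 < s ^ 2 := by nlinarith
  have : r ^ 2 * (s ^ 2 / c ^ 2) = s ^ 2 * (r ^ 2 / c ^ 2) := by ring
  nlinarith

lemma velθ_injective {θ : ℝ} (c : ℝ) (hθ0 : 0 ≤ θ) (hθ1 : θ ≤ 1) : Injective (velθ θ c) := by
  have hγ (r : ℝ) : 1 ≤ √(1 + r ^ 2 / c ^ 2) :=
    Real.one_le_sqrt.2 (le_add_of_nonneg_right (by positivity))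
  refine injective_radial_smul_of_strictMonoOn (f := fun r => θ / √(1 + r ^ 2 / c ^ 2) + (1 - θ))
    (fun r _ => div_add_one_sub_pos hθ1 (hγ r)) ?_
  intro r hr s hs hrs
  have h := strictMonoOn_div_sqrt_one_add_sq_div_sq c hr hs hrs
  simp only at h ⊢
  rcases hθ0.eq_or_lt with rfl | hθ
  · simpa using hrs
  · have h1 : (1 - θ) * r ≤ (1 - θ) * s := mul_le_mul_of_nonneg_left hrs.le (by linarith)
    have h2 := mul_lt_mul_of_pos_left h hθ
    calc (θ / √(1 + r ^ 2 / c ^ 2) + (1 - θ)) * r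
        = θ * (r / √(1 + r ^ 2 / c ^ 2)) + (1 - θ) * r := by ring
      _ < θ * (s / √(1 + s ^ 2 / c ^ 2)) + (1 - θ) * s := by linarith
      _ = (θ / √(1 + s ^ 2 / c ^ 2) + (1 - θ)) * s := by ring

lemma jb_rpow_neg (y : ℝ³) (β : ℝ) : jb y ^ (-β) = (1 + ‖y‖ ^ 2) ^ (-β / 2) := by
  rw [jb, Real.sqrt_eq_rpow, ← Real.rpow_mul (by positivity)]
  ring_nf

lemma integrable_jb_rpow_neg {β : ℝ} (hβ : 3 < β) : Integrable fun y : ℝ³ => jb y ^ (-β) := by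
  have h := integrable_rpow_neg_one_add_norm_sq (E := ℝ³) (μ := volume)
    (by rwa [finrank_euclideanSpace_fin, Nat.cast_ofNat])
  simpa only [jb_rpow_neg] using h

lemma integral_jb_rpow_neg_pos {β : ℝ} (hβ : 3 < β) : 0 < ∫ y : ℝ³, jb y ^ (-β) := by
  refine (integral_pos_iff_support_of_nonneg (fun y => (jb_rpow_pos y _).le)
    (integrable_jb_rpow_neg hβ)).2 ?_
  simp [support_eq_univ fun y => (jb_rpow_pos y (-β)).ne']

lemma le_mul_inv_jb_pow_mul_jb_rpow_neg {β M a : ℝ} {y p : ℝ³} (h : jb y ^ β * jb p ^ 5 * a ≤ M) :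
    a ≤ M * ((jb p ^ 5)⁻¹ * jb y ^ (-β)) := by
  rw [Real.rpow_neg (jb_pos y).le, ← mul_inv, ← div_eq_mul_inv,
    le_div_iff₀ (mul_pos (pow_pos (jb_pos p) 5) (jb_rpow_pos y _))]
  linarith

lemma lintegral_jb_pow_five_mul_comp_sub_smul_velθ_le {β θ c t : ℝ} (hβ : 3 < β) (hc : 1 ≤ c)
    (hθ0 : 0 ≤ θ) (hθ1 : θ ≤ 1) (ht : 0 < t) (x : ℝ³) :
    ∫⁻ p, ENNReal.ofReal ((jb p ^ 5)⁻¹ * jb (x - t • velθ θ c p) ^ (-β))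
      ≤ ENNReal.ofReal ((t ^ 3)⁻¹ * ∫ y, jb y ^ (-β)) := by
  set G : ℝ³ → ℝ := fun y => jb (x - t • y) ^ (-β)
  have hG : Integrable G := ((integrable_jb_rpow_neg hβ).comp_sub_left x).comp_smul ht.ne'
  have hv : Differentiable ℝ (velθ θ c) := fun p =>
    (hasFDerivAt_velθ θ (by positivity) p).differentiableAt
  calc ∫⁻ p, ENNReal.ofReal ((jb p ^ 5)⁻¹ * G (velθ θ c p))
      = ∫⁻ p, ENNReal.ofReal (jb p ^ 5)⁻¹ * ENNReal.ofReal (G (velθ θ c p)) := by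
        simp_rw [ENNReal.ofReal_mul (inv_nonneg.2 (pow_nonneg (jb_pos _).le 5))]
    _ ≤ ∫⁻ y, ENNReal.ofReal (G y) :=
        lintegral_mul_comp_le_lintegral volume hv (velθ_injective c hθ0 hθ1)
          (fun p => ENNReal.ofReal_le_ofReal
            ((inv_jb_pow_five_le_det_fderiv_velθ hc hθ1 p).trans (le_abs_self _))) _
    _ = ENNReal.ofReal (∫ y, G y) :=
        (ofReal_integral_eq_lintegral_ofReal hG
          (ae_of_all _ fun y => (jb_rpow_pos _ _).le)).symm
    _ = ENNReal.ofReal ((t ^ 3)⁻¹ * ∫ y, jb y ^ (-β)) := by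
        rw [integral_comp_sub_smul volume (fun y => jb y ^ (-β)) x ht.le,
          finrank_euclideanSpace_fin, smul_eq_mul]

/-- Dispersive estimate for the free flow: `‖T^θ[h]‖_{L^∞} ≲ t⁻³ ‖⟨x⟩^{3+ε}⟨p⟩⁵ h‖_{L^∞}`,
uniformly in `c ≥ 1`, `θ ∈ [0,1]`, `t > 0`. -/
theorem stmt16 (ε : ℝ) (hε : 0 < ε) :
    ∃ C > 0, ∀ (c θ t : ℝ), 1 ≤ c → 0 ≤ θ → θ ≤ 1 → 0 < t →
      ∀ (h : EuclideanSpace ℝ (Fin 3) → EuclideanSpace ℝ (Fin 3) → ℝ) (M : ℝ),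
        Measurable (Function.uncurry h) →
        (∀ x p, 0 ≤ h x p) →
        (∀ x p, jb x ^ (3 + ε) * jb p ^ 5 * h x p ≤ M) →
        ∀ x : EuclideanSpace ℝ (Fin 3),
          (∫ p, h (x - t • velθ θ c p) p) ≤ C * t⁻¹ ^ 3 * M := by
  have hβ : 3 < 3 + ε := by linarith
  set K := ∫ y : ℝ³, jb y ^ (-(3 + ε))
  refine ⟨K, integral_jb_rpow_neg_pos hβ, ?_⟩
  intro c θ t hc hθ0 hθ1 ht h M _ hpos hbound x
  have hM : 0 ≤ M :=
    (mul_nonneg (mul_pos (jb_rpow_pos 0 _) (pow_pos (jb_pos 0) 5)).le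
      (hpos 0 0)).trans (hbound 0 0)
  refine integral_le_of_lintegral_ofReal_le (fun p => hpos _ _)
    (mul_nonneg (mul_nonneg (integral_jb_rpow_neg_pos hβ).le (by positivity)) hM) ?_
  calc ∫⁻ p, ENNReal.ofReal (h (x - t • velθ θ c p) p)
      ≤ ∫⁻ p, ENNReal.ofReal M *
          ENNReal.ofReal ((jb p ^ 5)⁻¹ * jb (x - t • velθ θ c p) ^ (-(3 + ε))) :=
        lintegral_mono fun p => by
          rw [← ENNReal.ofReal_mul hM]
          exact ENNReal.ofReal_le_ofReal (le_mul_inv_jb_pow_mul_jb_rpow_neg (hbound _ _))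
    _ = ENNReal.ofReal M *
          ∫⁻ p, ENNReal.ofReal ((jb p ^ 5)⁻¹ * jb (x - t • velθ θ c p) ^ (-(3 + ε))) :=
        lintegral_const_mul' _ _ ENNReal.ofReal_ne_top
    _ ≤ ENNReal.ofReal M * ENNReal.ofReal ((t ^ 3)⁻¹ * K) := by
        gcongr
        exact lintegral_jb_pow_five_mul_comp_sub_smul_velθ_le hβ hc hθ0 hθ1 ht x
    _ = ENNReal.ofReal (K * t⁻¹ ^ 3 * M) := by
        rw [← ENNReal.ofReal_mul hM, inv_pow]
        ring_nf
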